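/- arXiv:math/0407004 — 2 statements merged into one kernel-verified Lean document; each statement's English description precedes it below -/
import Mathlib

section
/- (Block Decomposition Theorem, polynomial form) Let B be a board and S a block in B occupying rows I and columns J with |I| = s, |J| = t. Then R(B; x) = Σ_{j=0}^{min(s,t)} r_j(S) · x^j · R(B_{S,j}; x), where B_{S,j} is the j-th inclusion board of B relative to S. -/
/-- A set of cells is a non-attacking rook placement if no two distinct cells
share a row (first coordinate) or a column (second coordinate). -/
def IsRookPlacement (S : Finset (ℕ × ℕ)) : Prop :=
  ∀ p ∈ S, ∀ q ∈ S, p.1 = q.1 ∨ p.2 = q.2 → p = q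

instance : DecidablePred IsRookPlacement := fun S => by
  unfold IsRookPlacement; infer_instance

/-- `rookNum B k` = number of placements of `k` non-attacking rooks on board `B`. -/
def rookNum (B : Finset (ℕ × ℕ)) (k : ℕ) : ℕ :=
  ((B.powersetCard k).filter IsRookPlacement).card

/-- The rook polynomial `R(B; x) = Σ_k r_k(B) xᵏ`. -/
noncomputable def rookPoly (B : Finset (ℕ × ℕ)) : Polynomial ℕ :=
  ∑ k ∈ Finset.range (B.card + 1), Polynomial.C (rookNum B k) * Polynomial.X ^ k

/-- The full m × n rectangular board {1,…,m} × {1,…,n}. -/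
def rectBoard (m n : ℕ) : Finset (ℕ × ℕ) := Finset.Icc 1 m ×ˢ Finset.Icc 1 n

/-- Two boards are disjoint if no cell of one shares a row or column with a cell of the other. -/
def BoardsDisjoint (A B : Finset (ℕ × ℕ)) : Prop :=
  ∀ p ∈ A, ∀ q ∈ B, p.1 ≠ q.1 ∧ p.2 ≠ q.2

/-- `S` is a block in `B` occupying rows `I` and columns `J`. -/
def IsBlock (B S : Finset (ℕ × ℕ)) (I J : Finset ℕ) : Prop :=
  S = B ∩ I ×ˢ J ∧
  (∀ i ∈ I, ∀ i' ∈ I, ∀ j ∉ J, ((i, j) ∈ B ↔ (i', j) ∈ B)) ∧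
  (∀ i ∉ I, ∀ j ∈ J, ∀ j' ∈ J, ((i, j) ∈ B ↔ (i, j') ∈ B))

/-- The board obtained from `B` by deleting all cells of `S`, all cells in rows `I'`,
and all cells in columns `J'`. -/
def delBoard (B S : Finset (ℕ × ℕ)) (I' J' : Finset ℕ) : Finset (ℕ × ℕ) :=
  (B \ S).filter (fun p => p.1 ∉ I' ∧ p.2 ∉ J')

/- ------------------ auxiliary lemmas ------------------ -/

lemma rookPlacement_subset {P Q : Finset (ℕ × ℕ)} (h : P ⊆ Q) (hQ : IsRookPlacement Q) :
    IsRookPlacement P := fun p hp q hq hpq => hQ p (h hp) q (h hq) hpq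

lemma rook_card_fst {T : Finset (ℕ × ℕ)} (h : IsRookPlacement T) :
    (T.image Prod.fst).card = T.card :=
  Finset.card_image_of_injOn fun p hp q hq hpq => h p hp q hq (Or.inl hpq)

lemma rook_card_snd {T : Finset (ℕ × ℕ)} (h : IsRookPlacement T) :
    (T.image Prod.snd).card = T.card :=
  Finset.card_image_of_injOn fun p hp q hq hpq => h p hp q hq (Or.inr hpq)

lemma rookPoly_eq_sum (B : Finset (ℕ × ℕ)) :
    rookPoly B = ∑ P ∈ B.powerset.filter IsRookPlacement,
      (Polynomial.X : Polynomial ℕ) ^ P.card := by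
  classical
  unfold rookPoly
  rw [← Finset.sum_fiberwise_of_maps_to (g := Finset.card)
      (t := Finset.range (B.card + 1))
      (fun P hP => by
        simp only [Finset.mem_filter, Finset.mem_powerset] at hP
        exact Finset.mem_range.2 (Nat.lt_succ_of_le (Finset.card_le_card hP.1)))
      (fun P => (Polynomial.X : Polynomial ℕ) ^ P.card)]
  refine Finset.sum_congr rfl fun k _ => ?_
  have h1 : (B.powerset.filter IsRookPlacement).filter (fun P => P.card = k)
      = (B.powersetCard k).filter IsRookPlacement := by
    rw [Finset.filter_comm, Finset.powersetCard_eq_filter]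
  rw [Finset.sum_congr rfl (fun P hP => by
        rw [(Finset.mem_filter.1 hP).2]),
      Finset.sum_const, h1, nsmul_eq_mul]
  rw [rookNum]
  norm_cast

/-- Extend an equivalence between two finsets of `ℕ` to a function `ℕ → ℕ`
that is the identity off the source. -/
def extEquiv (s t : Finset ℕ) (e : {x // x ∈ s} ≃ {x // x ∈ t}) (i : ℕ) : ℕ :=
  if h : i ∈ s then (e ⟨i, h⟩ : ℕ) else i

lemma extEquiv_mem {s t : Finset ℕ} (e : {x // x ∈ s} ≃ {x // x ∈ t}) {i : ℕ} (h : i ∈ s) :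
    extEquiv s t e i ∈ t := by
  rw [extEquiv, dif_pos h]; exact (e ⟨i, h⟩).2

lemma extEquiv_not_mem {s t : Finset ℕ} (e : {x // x ∈ s} ≃ {x // x ∈ t}) {i : ℕ}
    (h : i ∉ s) : extEquiv s t e i = i := dif_neg h

lemma extEquiv_left_inv {s t : Finset ℕ} (e : {x // x ∈ s} ≃ {x // x ∈ t}) {i : ℕ}
    (h : i ∈ s) : extEquiv t s e.symm (extEquiv s t e i) = i := by
  have h1 : extEquiv s t e i ∈ t := extEquiv_mem e h
  have h2 : (⟨extEquiv s t e i, h1⟩ : {x // x ∈ t}) = e ⟨i, h⟩ :=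
    Subtype.ext (dif_pos h)
  conv_lhs => rw [extEquiv]
  rw [dif_pos h1, h2, Equiv.symm_apply_apply]

/-- The key bijection lemma: for a fixed sub-placement `T` on the block `S`,
placements `P` on `B` with `P ∩ S = T` correspond to placements on the
inclusion board. -/
lemma core (B S : Finset (ℕ × ℕ)) (I J : Finset ℕ)
    (hS1 : S = B ∩ I ×ˢ J)
    (hrow : ∀ i ∈ I, ∀ i' ∈ I, ∀ j ∉ J, ((i, j) ∈ B ↔ (i', j) ∈ B))
    (hcol : ∀ i ∉ I, ∀ j ∈ J, ∀ j' ∈ J, ((i, j) ∈ B ↔ (i, j') ∈ B))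
    (T : Finset (ℕ × ℕ)) (hTS : T ⊆ S) (hTpl : IsRookPlacement T)
    (I' J' : Finset ℕ) (hI'I : I' ⊆ I) (hJ'J : J' ⊆ J)
    (hI'c : I'.card = T.card) (hJ'c : J'.card = T.card) :
    ∑ P ∈ (B.powerset.filter IsRookPlacement).filter (fun P => P ∩ S = T),
        (Polynomial.X : Polynomial ℕ) ^ P.card
      = ∑ Q ∈ (delBoard B S I' J').powerset.filter IsRookPlacement,
          (Polynomial.X : Polynomial ℕ) ^ (T.card + Q.card) := by
  classical
  have hSB : S ⊆ B := hS1 ▸ Finset.inter_subset_left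
  set A := T.image Prod.fst with hA
  set Cc := T.image Prod.snd with hCc
  have hmemS : ∀ a b : ℕ, (a, b) ∈ S ↔ (a, b) ∈ B ∧ a ∈ I ∧ b ∈ J := by
    intro a b
    rw [hS1, Finset.mem_inter, Finset.mem_product]
  have hAI : A ⊆ I := by
    intro i hi
    obtain ⟨p, hp, rfl⟩ := Finset.mem_image.1 hi
    have h := hTS hp
    rw [hS1] at h
    exact (Finset.mem_product.1 (Finset.mem_inter.1 h).2).1
  have hCJ : Cc ⊆ J := by
    intro j hj
    obtain ⟨p, hp, rfl⟩ := Finset.mem_image.1 hj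
    have h := hTS hp
    rw [hS1] at h
    exact (Finset.mem_product.1 (Finset.mem_inter.1 h).2).2
  have hAc : A.card = T.card := rook_card_fst hTpl
  have hCcard : Cc.card = T.card := rook_card_snd hTpl
  have heR : (I \ A).card = (I \ I').card := by
    rw [Finset.card_sdiff_of_subset hAI, Finset.card_sdiff_of_subset hI'I, hAc, hI'c]
  have heC : (J \ Cc).card = (J \ J').card := by
    rw [Finset.card_sdiff_of_subset hCJ, Finset.card_sdiff_of_subset hJ'J, hCcard, hJ'c]
  set eR := Finset.equivOfCardEq heR with heRdef
  set eC := Finset.equivOfCardEq heC with heCdef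
  set rF := extEquiv (I \ A) (I \ I') eR with hrFdef
  set rG := extEquiv (I \ I') (I \ A) eR.symm with hrGdef
  set cF := extEquiv (J \ Cc) (J \ J') eC with hcFdef
  set cG := extEquiv (J \ J') (J \ Cc) eC.symm with hcGdef
  have hrFG : ∀ i ∈ I \ A, rG (rF i) = i := fun i h => extEquiv_left_inv eR h
  have hrGF : ∀ i ∈ I \ I', rF (rG i) = i := by
    intro i h
    have h2 := extEquiv_left_inv eR.symm h
    rwa [Equiv.symm_symm] at h2
  have hcFG : ∀ j ∈ J \ Cc, cG (cF j) = j := fun j h => extEquiv_left_inv eC h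
  have hcGF : ∀ j ∈ J \ J', cF (cG j) = j := by
    intro j h
    have h2 := extEquiv_left_inv eC.symm h
    rwa [Equiv.symm_symm] at h2
  set f : ℕ × ℕ → ℕ × ℕ := fun p => (rF p.1, cF p.2) with hfdef
  set g : ℕ × ℕ → ℕ × ℕ := fun p => (rG p.1, cG p.2) with hgdef
  have hmemD : ∀ a b : ℕ, (a, b) ∈ delBoard B S I' J' ↔
      ((a, b) ∈ B ∧ (a, b) ∉ S) ∧ a ∉ I' ∧ b ∉ J' := by
    intro a b
    rw [delBoard, Finset.mem_filter, Finset.mem_sdiff]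
  -- forward cell lemma
  have hfcell : ∀ a b : ℕ, (a, b) ∈ B → (a, b) ∉ S → a ∉ A → b ∉ Cc →
      f (a, b) ∈ delBoard B S I' J' ∧ g (f (a, b)) = (a, b) := by
    intro a b hB hS' hA' hC'
    by_cases h1 : a ∈ I
    · have h2 : b ∉ J := fun h2 => hS' ((hmemS a b).2 ⟨hB, h1, h2⟩)
      have haIA : a ∈ I \ A := Finset.mem_sdiff.2 ⟨h1, hA'⟩
      have hra : rF a ∈ I \ I' := extEquiv_mem eR haIA
      have hcb : cF b = b := extEquiv_not_mem eC (fun h => h2 (Finset.mem_sdiff.1 h).1)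
      have hcbG : cG b = b := extEquiv_not_mem eC.symm (fun h => h2 (Finset.mem_sdiff.1 h).1)
      obtain ⟨hrI, hrI'⟩ := Finset.mem_sdiff.1 hra
      have hfp : f (a, b) = (rF a, b) := by simp only [hfdef, hcb]
      have hBmem : (rF a, b) ∈ B := (hrow a h1 (rF a) hrI b h2).1 hB
      constructor
      · rw [hfp, hmemD]
        exact ⟨⟨hBmem, fun hs => h2 ((hmemS _ _).1 hs).2.2⟩, hrI', fun hb => h2 (hJ'J hb)⟩
      · rw [hfp]
        show (rG (rF a), cG b) = (a, b)
        rw [hcbG, hrFG a haIA]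
    · have hra : rF a = a := extEquiv_not_mem eR (fun h => h1 (Finset.mem_sdiff.1 h).1)
      have hraG : rG a = a := extEquiv_not_mem eR.symm (fun h => h1 (Finset.mem_sdiff.1 h).1)
      by_cases h2 : b ∈ J
      · have hbJC : b ∈ J \ Cc := Finset.mem_sdiff.2 ⟨h2, hC'⟩
        have hcb : cF b ∈ J \ J' := extEquiv_mem eC hbJC
        obtain ⟨hcJ, hcJ'⟩ := Finset.mem_sdiff.1 hcb
        have hfp : f (a, b) = (a, cF b) := by simp only [hfdef, hra]
        have hBmem : (a, cF b) ∈ B := (hcol a h1 b h2 (cF b) hcJ).1 hB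
        constructor
        · rw [hfp, hmemD]
          exact ⟨⟨hBmem, fun hs => h1 ((hmemS _ _).1 hs).2.1⟩, fun ha => h1 (hI'I ha), hcJ'⟩
        · rw [hfp]
          show (rG a, cG (cF b)) = (a, b)
          rw [hraG, hcFG b hbJC]
      · have hcb : cF b = b := extEquiv_not_mem eC (fun h => h2 (Finset.mem_sdiff.1 h).1)
        have hcbG : cG b = b := extEquiv_not_mem eC.symm (fun h => h2 (Finset.mem_sdiff.1 h).1)
        have hfp : f (a, b) = (a, b) := by simp only [hfdef, hra, hcb]
        constructor
        · rw [hfp, hmemD]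
          exact ⟨⟨hB, hS'⟩, fun ha => h1 (hI'I ha), fun hb => h2 (hJ'J hb)⟩
        · rw [hfp]
          show (rG a, cG b) = (a, b)
          rw [hraG, hcbG]
  -- backward cell lemma
  have hgcell : ∀ a b : ℕ, (a, b) ∈ delBoard B S I' J' →
      (g (a, b) ∈ B ∧ g (a, b) ∉ S ∧ (g (a, b)).1 ∉ A ∧ (g (a, b)).2 ∉ Cc) ∧
        f (g (a, b)) = (a, b) := by
    intro a b hq
    rw [hmemD] at hq
    obtain ⟨⟨hB, hS'⟩, hI'', hJ''⟩ := hq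
    by_cases h1 : a ∈ I
    · have h2 : b ∉ J := fun h2 => hS' ((hmemS a b).2 ⟨hB, h1, h2⟩)
      have haII : a ∈ I \ I' := Finset.mem_sdiff.2 ⟨h1, hI''⟩
      have hra : rG a ∈ I \ A := extEquiv_mem eR.symm haII
      obtain ⟨hrI, hrA⟩ := Finset.mem_sdiff.1 hra
      have hcb : cG b = b := extEquiv_not_mem eC.symm (fun h => h2 (Finset.mem_sdiff.1 h).1)
      have hcbF : cF b = b := extEquiv_not_mem eC (fun h => h2 (Finset.mem_sdiff.1 h).1)
      have hgp : g (a, b) = (rG a, b) := by simp only [hgdef, hcb]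
      have hBmem : (rG a, b) ∈ B := (hrow a h1 (rG a) hrI b h2).1 hB
      refine ⟨⟨?_, ?_, ?_, ?_⟩, ?_⟩
      · rw [hgp]; exact hBmem
      · rw [hgp]; exact fun hs => h2 ((hmemS _ _).1 hs).2.2
      · rw [hgp]; exact hrA
      · rw [hgp]; exact fun hc => h2 (hCJ hc)
      · rw [hgp]
        show (rF (rG a), cF b) = (a, b)
        rw [hcbF, hrGF a haII]
    · have hra : rG a = a := extEquiv_not_mem eR.symm (fun h => h1 (Finset.mem_sdiff.1 h).1)
      have hraF : rF a = a := extEquiv_not_mem eR (fun h => h1 (Finset.mem_sdiff.1 h).1)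
      by_cases h2 : b ∈ J
      · have hbJJ : b ∈ J \ J' := Finset.mem_sdiff.2 ⟨h2, hJ''⟩
        have hcb : cG b ∈ J \ Cc := extEquiv_mem eC.symm hbJJ
        obtain ⟨hcJ, hcCc⟩ := Finset.mem_sdiff.1 hcb
        have hgp : g (a, b) = (a, cG b) := by simp only [hgdef, hra]
        have hBmem : (a, cG b) ∈ B := (hcol a h1 b h2 (cG b) hcJ).1 hB
        refine ⟨⟨?_, ?_, ?_, ?_⟩, ?_⟩
        · rw [hgp]; exact hBmem
        · rw [hgp]; exact fun hs => h1 ((hmemS _ _).1 hs).2.1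
        · rw [hgp]; exact fun ha => h1 (hAI ha)
        · rw [hgp]; exact hcCc
        · rw [hgp]
          show (rF a, cF (cG b)) = (a, b)
          rw [hraF, hcGF b hbJJ]
      · have hcb : cG b = b := extEquiv_not_mem eC.symm (fun h => h2 (Finset.mem_sdiff.1 h).1)
        have hcbF : cF b = b := extEquiv_not_mem eC (fun h => h2 (Finset.mem_sdiff.1 h).1)
        have hgp : g (a, b) = (a, b) := by simp only [hgdef, hra, hcb]
        refine ⟨⟨?_, ?_, ?_, ?_⟩, ?_⟩
        · rw [hgp]; exact hB
        · rw [hgp]; exact hS'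
        · rw [hgp]; exact fun ha => h1 (hAI ha)
        · rw [hgp]; exact fun hc => h2 (hCJ hc)
        · rw [hgp]
          show (rF a, cF b) = (a, b)
          rw [hraF, hcbF]
  -- cells of P \ S avoid the rows/cols of T
  have hsrc : ∀ P : Finset (ℕ × ℕ), IsRookPlacement P → P ∩ S = T →
      ∀ p ∈ P \ S, p.1 ∉ A ∧ p.2 ∉ Cc := by
    intro P hPpl hPT p hp
    obtain ⟨hpP, hpS⟩ := Finset.mem_sdiff.1 hp
    constructor
    · intro hpA
      obtain ⟨t, ht, hteq⟩ := Finset.mem_image.1 hpA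
      have htPS : t ∈ P ∩ S := hPT ▸ ht
      have heq : p = t := hPpl p hpP t (Finset.mem_inter.1 htPS).1 (Or.inl hteq.symm)
      exact hpS (by rw [heq]; exact (Finset.mem_inter.1 htPS).2)
    · intro hpC
      obtain ⟨t, ht, hteq⟩ := Finset.mem_image.1 hpC
      have htPS : t ∈ P ∩ S := hPT ▸ ht
      have heq : p = t := hPpl p hpP t (Finset.mem_inter.1 htPS).1 (Or.inr hteq.symm)
      exact hpS (by rw [heq]; exact (Finset.mem_inter.1 htPS).2)
  have hPcells : ∀ P : Finset (ℕ × ℕ), P ⊆ B → IsRookPlacement P → P ∩ S = T →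
      ∀ p ∈ P \ S, f p ∈ delBoard B S I' J' ∧ g (f p) = p := by
    intro P hPB hPpl hPT p hp
    obtain ⟨h1, h2⟩ := hsrc P hPpl hPT p hp
    obtain ⟨hpP, hpS⟩ := Finset.mem_sdiff.1 hp
    obtain ⟨a, b⟩ := p
    exact hfcell a b (hPB hpP) hpS h1 h2
  have hQcells : ∀ Q : Finset (ℕ × ℕ), Q ⊆ delBoard B S I' J' →
      ∀ q ∈ Q, (g q ∈ B ∧ g q ∉ S ∧ (g q).1 ∉ A ∧ (g q).2 ∉ Cc) ∧ f (g q) = q := by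
    intro Q hQD q hq
    obtain ⟨a, b⟩ := q
    exact hgcell a b (hQD hq)
  refine Finset.sum_nbij' (fun P => (P \ S).image f) (fun Q => T ∪ Q.image g)
    ?_ ?_ ?_ ?_ ?_
  · -- maps to
    intro P hP
    simp only [Finset.mem_filter, Finset.mem_powerset] at hP ⊢
    obtain ⟨⟨hPB, hPpl⟩, hPT⟩ := hP
    constructor
    · intro x hx
      obtain ⟨p, hp, rfl⟩ := Finset.mem_image.1 hx
      exact (hPcells P hPB hPpl hPT p hp).1
    · intro x hx y hy hxy
      obtain ⟨p, hp, rfl⟩ := Finset.mem_image.1 hx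
      obtain ⟨q, hq, rfl⟩ := Finset.mem_image.1 hy
      have hp' := (hPcells P hPB hPpl hPT p hp).2
      have hq' := (hPcells P hPB hPpl hPT q hq).2
      have hpq : p = q := by
        refine hPpl p (Finset.mem_sdiff.1 hp).1 q (Finset.mem_sdiff.1 hq).1 ?_
        rcases hxy with h | h
        · left
          calc p.1 = (g (f p)).1 := by rw [hp']
            _ = rG ((f p).1) := rfl
            _ = rG ((f q).1) := by rw [h]
            _ = (g (f q)).1 := rfl
            _ = q.1 := by rw [hq']
        · right
          calc p.2 = (g (f p)).2 := by rw [hp']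
            _ = cG ((f p).2) := rfl
            _ = cG ((f q).2) := by rw [h]
            _ = (g (f q)).2 := rfl
            _ = q.2 := by rw [hq']
      rw [hpq]
  · -- inverse maps to
    intro Q hQ
    simp only [Finset.mem_filter, Finset.mem_powerset] at hQ ⊢
    obtain ⟨hQD, hQpl⟩ := hQ
    refine ⟨⟨?_, ?_⟩, ?_⟩
    · intro x hx
      rcases Finset.mem_union.1 hx with hx1 | hx1
      · exact hSB (hTS hx1)
      · obtain ⟨q, hq, rfl⟩ := Finset.mem_image.1 hx1
        exact (hQcells Q hQD q hq).1.1
    · intro x hx y hy hxy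
      rcases Finset.mem_union.1 hx with hx1 | hx1 <;>
        rcases Finset.mem_union.1 hy with hy1 | hy1
      · exact hTpl x hx1 y hy1 hxy
      · obtain ⟨q, hq, rfl⟩ := Finset.mem_image.1 hy1
        exfalso
        rcases hxy with h | h
        · exact (hQcells Q hQD q hq).1.2.2.1
            (h ▸ Finset.mem_image_of_mem Prod.fst hx1)
        · exact (hQcells Q hQD q hq).1.2.2.2
            (h ▸ Finset.mem_image_of_mem Prod.snd hx1)
      · obtain ⟨q, hq, rfl⟩ := Finset.mem_image.1 hx1
        exfalso
        rcases hxy with h | h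
        · exact (hQcells Q hQD q hq).1.2.2.1
            (h ▸ Finset.mem_image_of_mem Prod.fst hy1)
        · exact (hQcells Q hQD q hq).1.2.2.2
            (h ▸ Finset.mem_image_of_mem Prod.snd hy1)
      · obtain ⟨p, hp, rfl⟩ := Finset.mem_image.1 hx1
        obtain ⟨q, hq, rfl⟩ := Finset.mem_image.1 hy1
        have hp' := (hQcells Q hQD p hp).2
        have hq' := (hQcells Q hQD q hq).2
        have hpq : p = q := by
          refine hQpl p hp q hq ?_
          rcases hxy with h | h
          · left
            calc p.1 = (f (g p)).1 := by rw [hp']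
              _ = rF ((g p).1) := rfl
              _ = rF ((g q).1) := by rw [h]
              _ = (f (g q)).1 := rfl
              _ = q.1 := by rw [hq']
          · right
            calc p.2 = (f (g p)).2 := by rw [hp']
              _ = cF ((g p).2) := rfl
              _ = cF ((g q).2) := by rw [h]
              _ = (f (g q)).2 := rfl
              _ = q.2 := by rw [hq']
        rw [hpq]
    · rw [Finset.union_inter_distrib_right]
      have h1 : T ∩ S = T := Finset.inter_eq_left.2 hTS
      have h2 : Q.image g ∩ S = ∅ := by
        rw [Finset.eq_empty_iff_forall_notMem]
        intro x hx
        obtain ⟨hx1, hx2⟩ := Finset.mem_inter.1 hx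
        obtain ⟨q, hq, rfl⟩ := Finset.mem_image.1 hx1
        exact (hQcells Q hQD q hq).1.2.1 hx2
      rw [h1, h2, Finset.union_empty]
  · -- left inverse
    intro P hP
    simp only [Finset.mem_filter, Finset.mem_powerset] at hP
    obtain ⟨⟨hPB, hPpl⟩, hPT⟩ := hP
    show T ∪ ((P \ S).image f).image g = P
    rw [Finset.image_image]
    have h1 : (P \ S).image (g ∘ f) = (P \ S).image id :=
      Finset.image_congr (fun p hp => (hPcells P hPB hPpl hPT p (Finset.mem_coe.1 hp)).2)
    rw [h1, Finset.image_id, ← hPT]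
    ext x
    simp only [Finset.mem_union, Finset.mem_inter, Finset.mem_sdiff]
    tauto
  · -- right inverse
    intro Q hQ
    simp only [Finset.mem_filter, Finset.mem_powerset] at hQ
    obtain ⟨hQD, hQpl⟩ := hQ
    have hTn : T \ S = ∅ := Finset.sdiff_eq_empty_iff_subset.2 hTS
    have hgS : Q.image g \ S = Q.image g := by
      rw [Finset.sdiff_eq_self_iff_disjoint, Finset.disjoint_left]
      intro x hx hxS
      obtain ⟨q, hq, rfl⟩ := Finset.mem_image.1 hx
      exact (hQcells Q hQD q hq).1.2.1 hxS
    show ((T ∪ Q.image g) \ S).image f = Q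
    rw [Finset.union_sdiff_distrib, hTn, hgS, Finset.empty_union, Finset.image_image]
    have h1 : Q.image (f ∘ g) = Q.image id :=
      Finset.image_congr (fun q hq => (hQcells Q hQD q (Finset.mem_coe.1 hq)).2)
    rw [h1, Finset.image_id]
  · -- values agree
    intro P hP
    simp only [Finset.mem_filter, Finset.mem_powerset] at hP
    obtain ⟨⟨hPB, hPpl⟩, hPT⟩ := hP
    have hinj : Set.InjOn f ↑(P \ S) := by
      intro p hp q hq hfpq
      have h1 := (hPcells P hPB hPpl hPT p (Finset.mem_coe.1 hp)).2
      have h2 := (hPcells P hPB hPpl hPT q (Finset.mem_coe.1 hq)).2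
      rw [← h1, ← h2, hfpq]
    rw [Finset.card_image_of_injOn hinj]
    congr 1
    rw [← hPT]
    exact (Finset.card_inter_add_card_sdiff P S).symm

theorem stmt10 (B S : Finset (ℕ × ℕ)) (I J : Finset ℕ) (hS : IsBlock B S I J)
    (Irm Jrm : ℕ → Finset ℕ)
    (hI : ∀ j ≤ min I.card J.card, Irm j ⊆ I ∧ (Irm j).card = j)
    (hJ : ∀ j ≤ min I.card J.card, Jrm j ⊆ J ∧ (Jrm j).card = j) :
    rookPoly B =
      ∑ j ∈ Finset.range (min I.card J.card + 1),
        Polynomial.C (rookNum S j) * Polynomial.X ^ j *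
          rookPoly (delBoard B S (Irm j) (Jrm j)) := by
  classical
  obtain ⟨hS1, hrow, hcol⟩ := hS
  have hSB : S ⊆ B := hS1 ▸ Finset.inter_subset_left
  -- card bound for placements on S
  have hTm : ∀ T ∈ S.powerset.filter IsRookPlacement,
      T.card ≤ min I.card J.card := by
    intro T hT
    simp only [Finset.mem_filter, Finset.mem_powerset] at hT
    obtain ⟨hTS, hTpl⟩ := hT
    have h1 : (T.image Prod.fst).card = T.card := rook_card_fst hTpl
    have h2 : (T.image Prod.snd).card = T.card := rook_card_snd hTpl
    have hI1 : T.image Prod.fst ⊆ I := by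
      intro i hi
      obtain ⟨p, hp, rfl⟩ := Finset.mem_image.1 hi
      have h := hTS hp
      rw [hS1] at h
      exact (Finset.mem_product.1 (Finset.mem_inter.1 h).2).1
    have hJ1 : T.image Prod.snd ⊆ J := by
      intro j hj
      obtain ⟨p, hp, rfl⟩ := Finset.mem_image.1 hj
      have h := hTS hp
      rw [hS1] at h
      exact (Finset.mem_product.1 (Finset.mem_inter.1 h).2).2
    exact le_min (h1 ▸ Finset.card_le_card hI1) (h2 ▸ Finset.card_le_card hJ1)
  rw [rookPoly_eq_sum]
  rw [← Finset.sum_fiberwise_of_maps_to (g := fun P => P ∩ S)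
      (t := S.powerset.filter IsRookPlacement)
      (fun P hP => by
        simp only [Finset.mem_filter, Finset.mem_powerset] at hP ⊢
        exact ⟨Finset.inter_subset_right,
          rookPlacement_subset Finset.inter_subset_left hP.2⟩)
      (fun P => (Polynomial.X : Polynomial ℕ) ^ P.card)]
  -- rewrite RHS
  have hRHS : ∑ j ∈ Finset.range (min I.card J.card + 1),
        Polynomial.C (rookNum S j) * Polynomial.X ^ j *
          rookPoly (delBoard B S (Irm j) (Jrm j))
      = ∑ T ∈ S.powerset.filter IsRookPlacement,
          (Polynomial.X : Polynomial ℕ) ^ T.card *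
            rookPoly (delBoard B S (Irm T.card) (Jrm T.card)) := by
    rw [← Finset.sum_fiberwise_of_maps_to (g := Finset.card)
        (t := Finset.range (min I.card J.card + 1))
        (fun T hT => Finset.mem_range.2 (Nat.lt_succ_of_le (hTm T hT)))
        (fun T => (Polynomial.X : Polynomial ℕ) ^ T.card *
            rookPoly (delBoard B S (Irm T.card) (Jrm T.card)))]
    refine Finset.sum_congr rfl fun j _ => ?_
    have hcount : ((S.powerset.filter IsRookPlacement).filter
        (fun T => T.card = j)).card = rookNum S j := by
      rw [Finset.filter_comm, ← Finset.powersetCard_eq_filter, rookNum]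
    rw [Finset.sum_congr rfl (fun T hT => by
          rw [(Finset.mem_filter.1 hT).2]),
        Finset.sum_const, hcount, nsmul_eq_mul, mul_assoc]
    norm_cast
  rw [hRHS]
  refine Finset.sum_congr rfl fun T hT => ?_
  have hTm' := hTm T hT
  simp only [Finset.mem_filter, Finset.mem_powerset] at hT
  obtain ⟨hTS, hTpl⟩ := hT
  obtain ⟨hIrm, hIrmc⟩ := hI T.card hTm'
  obtain ⟨hJrm, hJrmc⟩ := hJ T.card hTm'
  rw [rookPoly_eq_sum, Finset.mul_sum]
  rw [core B S I J hS1 hrow hcol T hTS hTpl (Irm T.card) (Jrm T.card)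
      hIrm hJrm hIrmc hJrmc]
  exact Finset.sum_congr rfl fun Q _ => pow_add _ _ _
end

section
/- For a block S in B occupying row set I and column set J, the rook counts of the inclusion board are independent of the choice of deleted rows and columns: if I₁, I₂ ⊆ I with |I₁| = |I₂| = j and J₁, J₂ ⊆ J with |J₁| = |J₂| = j, then the board (B \ S) with all cells in rows of I₁ and columns of J₁ removed is rook equivalent to the board (B \ S) with all cells in rows of I₂ and columns of J₂ removed. -/
open Finset

/-- helper function: piecewise map from `s ∪ u` using equivs, identity elsewhere. -/
noncomputable def pieceFun (s u : Finset ℕ) {t v : Finset ℕ}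
    (e : {x // x ∈ s} ≃ {x // x ∈ t}) (f : {x // x ∈ u} ≃ {x // x ∈ v}) : ℕ → ℕ :=
  fun i => if h : i ∈ s then (e ⟨i, h⟩ : ℕ) else if h' : i ∈ u then (f ⟨i, h'⟩ : ℕ) else i

lemma pieceFun_inv (s t u v : Finset ℕ)
    (e : {x // x ∈ s} ≃ {x // x ∈ t}) (f : {x // x ∈ u} ≃ {x // x ∈ v})
    (hsu : Disjoint s u) (htv : Disjoint t v)
    (hout : ∀ i, i ∉ s → i ∉ u → i ∉ t ∧ i ∉ v) (i : ℕ) :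
    pieceFun t v e.symm f.symm (pieceFun s u e f i) = i := by
  unfold pieceFun
  by_cases h : i ∈ s
  · simp only [dif_pos h]
    have ht : ((e ⟨i, h⟩ : {x // x ∈ t}) : ℕ) ∈ t := (e ⟨i, h⟩).2
    simp only [dif_pos ht, Subtype.coe_eta, Equiv.symm_apply_apply]
  · simp only [dif_neg h]
    by_cases h' : i ∈ u
    · simp only [dif_pos h']
      have hv : ((f ⟨i, h'⟩ : {x // x ∈ v}) : ℕ) ∈ v := (f ⟨i, h'⟩).2
      have hnt : ((f ⟨i, h'⟩ : {x // x ∈ v}) : ℕ) ∉ t :=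
        fun hh => Finset.disjoint_left.1 htv hh hv
      simp only [dif_neg hnt, dif_pos hv, Subtype.coe_eta, Equiv.symm_apply_apply]
    · simp only [dif_neg h']
      obtain ⟨h1, h2⟩ := hout i h h'
      simp only [dif_neg h1, dif_neg h2]

/-- Existence of a permutation of ℕ fixing the complement of `I` and carrying
`I \ A₁` onto `I \ A₂`. -/
lemma exists_perm (I A₁ A₂ : Finset ℕ) (h₁ : A₁ ⊆ I) (h₂ : A₂ ⊆ I)
    (hc : A₁.card = A₂.card) :
    ∃ σ : Equiv.Perm ℕ, (∀ i, i ∉ I → σ i = i) ∧ (∀ i ∈ I \ A₁, σ i ∈ I \ A₂) ∧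
      (∀ i, i ∉ I → σ.symm i = i) ∧ (∀ i ∈ I \ A₂, σ.symm i ∈ I \ A₁) := by
  have hcs : (I \ A₁).card = (I \ A₂).card := by
    rw [card_sdiff_of_subset h₁, card_sdiff_of_subset h₂, hc]
  let e := Finset.equivOfCardEq hcs
  let f := Finset.equivOfCardEq hc
  have hsu : Disjoint (I \ A₁) A₁ := sdiff_disjoint
  have htv : Disjoint (I \ A₂) A₂ := sdiff_disjoint
  have hout1 : ∀ i, i ∉ I \ A₁ → i ∉ A₁ → i ∉ I \ A₂ ∧ i ∉ A₂ := by
    intro i hi hi'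
    have hI : i ∉ I := fun h => hi (mem_sdiff.2 ⟨h, hi'⟩)
    exact ⟨fun h => hI (mem_sdiff.1 h).1, fun h => hI (h₂ h)⟩
  have hout2 : ∀ i, i ∉ I \ A₂ → i ∉ A₂ → i ∉ I \ A₁ ∧ i ∉ A₁ := by
    intro i hi hi'
    have hI : i ∉ I := fun h => hi (mem_sdiff.2 ⟨h, hi'⟩)
    exact ⟨fun h => hI (mem_sdiff.1 h).1, fun h => hI (h₁ h)⟩
  refine ⟨⟨pieceFun (I \ A₁) A₁ e f, pieceFun (I \ A₂) A₂ e.symm f.symm,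
    fun i => pieceFun_inv _ _ _ _ e f hsu htv hout1 i,
    fun i => by
      have := pieceFun_inv _ _ _ _ e.symm f.symm htv hsu hout2 i
      simpa using this⟩, ?_, ?_, ?_, ?_⟩
  · intro i hi
    have h1 : i ∉ I \ A₁ := fun h => hi (mem_sdiff.1 h).1
    have h2 : i ∉ A₁ := fun h => hi (h₁ h)
    show pieceFun (I \ A₁) A₁ e f i = i
    unfold pieceFun; simp [h1, h2]
  · intro i hi
    show pieceFun (I \ A₁) A₁ e f i ∈ I \ A₂
    unfold pieceFun
    simp only [dif_pos hi]
    exact (e ⟨i, hi⟩).2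
  · intro i hi
    have h1 : i ∉ I \ A₂ := fun h => hi (mem_sdiff.1 h).1
    have h2 : i ∉ A₂ := fun h => hi (h₂ h)
    show pieceFun (I \ A₂) A₂ e.symm f.symm i = i
    unfold pieceFun; simp [h1, h2]
  · intro i hi
    show pieceFun (I \ A₂) A₂ e.symm f.symm i ∈ I \ A₁
    unfold pieceFun
    simp only [dif_pos hi]
    exact (e.symm ⟨i, hi⟩).2

lemma rookNum_of_equiv (eR eC : Equiv.Perm ℕ) (d₁ d₂ : Finset (ℕ × ℕ))
    (h₁ : ∀ p ∈ d₁, (eR p.1, eC p.2) ∈ d₂)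
    (h₂ : ∀ p ∈ d₂, (eR.symm p.1, eC.symm p.2) ∈ d₁) (k : ℕ) :
    rookNum d₁ k = rookNum d₂ k := by
  classical
  set F : ℕ × ℕ ≃ ℕ × ℕ := eR.prodCongr eC with hF
  have hFapp : ∀ p : ℕ × ℕ, F p = (eR p.1, eC p.2) := fun p => rfl
  have hFsymm : ∀ p : ℕ × ℕ, F.symm p = (eR.symm p.1, eC.symm p.2) := fun p => rfl
  have key : ∀ (e : ℕ × ℕ ≃ ℕ × ℕ) (d d' : Finset (ℕ × ℕ)),
      (∀ p ∈ d, e p ∈ d') → ∀ T, T ∈ (d.powersetCard k).filter IsRookPlacement →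
      (∀ a b : ℕ × ℕ, a.1 = b.1 ∨ a.2 = b.2 → (e a).1 = (e b).1 ∨ (e a).2 = (e b).2) →
      (∀ a b : ℕ × ℕ, (e a).1 = (e b).1 ∨ (e a).2 = (e b).2 → a.1 = b.1 ∨ a.2 = b.2) →
      T.image e ∈ (d'.powersetCard k).filter IsRookPlacement := by
    intro e d d' hmap T hT hfwd hbwd
    simp only [mem_filter, mem_powersetCard] at hT ⊢
    obtain ⟨⟨hsub, hcard⟩, hrook⟩ := hT
    refine ⟨⟨fun q hq => ?_, ?_⟩, ?_⟩
    · obtain ⟨p, hp, rfl⟩ := mem_image.1 hq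
      exact hmap p (hsub hp)
    · rw [card_image_of_injective _ e.injective, hcard]
    · intro p hp q hq hpq
      obtain ⟨a, ha, rfl⟩ := mem_image.1 hp
      obtain ⟨b, hb, rfl⟩ := mem_image.1 hq
      have : a = b := hrook a ha b hb (hbwd a b hpq)
      rw [this]
  have hlineF : ∀ a b : ℕ × ℕ, a.1 = b.1 ∨ a.2 = b.2 ↔ (F a).1 = (F b).1 ∨ (F a).2 = (F b).2 := by
    intro a b
    rw [hFapp, hFapp]
    constructor
    · rintro (h | h)
      · exact Or.inl (by simp [h])
      · exact Or.inr (by simp [h])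
    · rintro (h | h)
      · exact Or.inl (eR.injective h)
      · exact Or.inr (eC.injective h)
  have hlineG : ∀ a b : ℕ × ℕ, a.1 = b.1 ∨ a.2 = b.2 ↔
      (F.symm a).1 = (F.symm b).1 ∨ (F.symm a).2 = (F.symm b).2 := by
    intro a b
    rw [hFsymm, hFsymm]
    constructor
    · rintro (h | h)
      · exact Or.inl (by simp [h])
      · exact Or.inr (by simp [h])
    · rintro (h | h)
      · exact Or.inl (eR.symm.injective h)
      · exact Or.inr (eC.symm.injective h)
  unfold rookNum
  refine Finset.card_bij' (fun T _ => T.image F) (fun T _ => T.image F.symm) ?_ ?_ ?_ ?_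
  · intro T hT
    exact key F d₁ d₂ (fun p hp => by rw [hFapp]; exact h₁ p hp) T hT
      (fun a b h => (hlineF a b).1 h) (fun a b h => (hlineF a b).2 h)
  · intro T hT
    exact key F.symm d₂ d₁ (fun p hp => by rw [hFsymm]; exact h₂ p hp) T hT
      (fun a b h => (hlineG a b).1 h) (fun a b h => (hlineG a b).2 h)
  · intro T _
    rw [image_image]
    simp
  · intro T _
    rw [image_image]
    simp

theorem stmt11 (B S : Finset (ℕ × ℕ)) (I J : Finset ℕ) (hS : IsBlock B S I J)
    (j : ℕ) (I₁ I₂ J₁ J₂ : Finset ℕ)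
    (hI₁ : I₁ ⊆ I) (hI₂ : I₂ ⊆ I) (hJ₁ : J₁ ⊆ J) (hJ₂ : J₂ ⊆ J)
    (hcI₁ : I₁.card = j) (hcI₂ : I₂.card = j) (hcJ₁ : J₁.card = j) (hcJ₂ : J₂.card = j)
    (k : ℕ) :
    rookNum (delBoard B S I₁ J₁) k = rookNum (delBoard B S I₂ J₂) k := by
  obtain ⟨hSeq, hrow, hcol⟩ := hS
  obtain ⟨σ, hσ_fix, hσ_map, hσ'_fix, hσ'_map⟩ :=
    exists_perm I I₁ I₂ hI₁ hI₂ (hcI₁.trans hcI₂.symm)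
  obtain ⟨τ, hτ_fix, hτ_map, hτ'_fix, hτ'_map⟩ :=
    exists_perm J J₁ J₂ hJ₁ hJ₂ (hcJ₁.trans hcJ₂.symm)
  have main : ∀ (σ : Equiv.Perm ℕ) (τ : Equiv.Perm ℕ) (A₁ A₂ C₁ C₂ : Finset ℕ),
      A₁ ⊆ I → A₂ ⊆ I → C₁ ⊆ J → C₂ ⊆ J →
      (∀ i, i ∉ I → σ i = i) → (∀ i ∈ I \ A₁, σ i ∈ I \ A₂) →
      (∀ i, i ∉ J → τ i = i) → (∀ i ∈ J \ C₁, τ i ∈ J \ C₂) →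
      ∀ p ∈ delBoard B S A₁ C₁, (σ p.1, τ p.2) ∈ delBoard B S A₂ C₂ := by
    intro σ τ A₁ A₂ C₁ C₂ hA₁ hA₂ hC₁ hC₂ hfix hmap hfix' hmap' p hp
    simp only [delBoard, mem_filter, mem_sdiff] at hp ⊢
    obtain ⟨⟨hpB, hpS⟩, hpI, hpJ⟩ := hp
    obtain ⟨i, jc⟩ := p
    dsimp only at *
    by_cases hiI : i ∈ I
    · by_cases hjJ : jc ∈ J
      · exact absurd (by rw [hSeq]; exact mem_inter.2 ⟨hpB, mem_product.2 ⟨hiI, hjJ⟩⟩) hpS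
      · -- row strip
        have hi' : i ∈ I \ A₁ := mem_sdiff.2 ⟨hiI, hpI⟩
        have hσi := hmap i hi'
        obtain ⟨hσI, hσA₂⟩ := mem_sdiff.1 hσi
        have hτj : τ jc = jc := hfix' jc hjJ
        rw [hτj]
        refine ⟨⟨(hrow i hiI (σ i) hσI jc hjJ).1 hpB, ?_⟩, hσA₂, fun h => hjJ (hC₂ h)⟩
        rw [hSeq]
        intro h
        exact hjJ (mem_product.1 (mem_inter.1 h).2).2
    · have hσi : σ i = i := hfix i hiI
      rw [hσi]
      by_cases hjJ : jc ∈ J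
      · have hj' : jc ∈ J \ C₁ := mem_sdiff.2 ⟨hjJ, hpJ⟩
        have hτj := hmap' jc hj'
        obtain ⟨hτJ, hτC₂⟩ := mem_sdiff.1 hτj
        refine ⟨⟨(hcol i hiI jc hjJ (τ jc) hτJ).1 hpB, ?_⟩, fun h => hiI (hA₂ h), hτC₂⟩
        rw [hSeq]
        intro h
        exact hiI (mem_product.1 (mem_inter.1 h).2).1
      · have hτj : τ jc = jc := hfix' jc hjJ
        rw [hτj]
        exact ⟨⟨hpB, hpS⟩, fun h => hiI (hA₂ h), fun h => hjJ (hC₂ h)⟩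
  exact rookNum_of_equiv σ τ _ _
    (main σ τ I₁ I₂ J₁ J₂ hI₁ hI₂ hJ₁ hJ₂ hσ_fix hσ_map hτ_fix hτ_map)
    (main σ.symm τ.symm I₂ I₁ J₂ J₁ hI₂ hI₁ hJ₂ hJ₁ hσ'_fix hσ'_map hτ'_fix hτ'_map) k
end
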